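/- arXiv:1107.3790 — 2 statements merged into one kernel-verified Lean document; each statement's English description precedes it below -/
import Mathlib

section
/- With μ a Radon diffuse measure on (0,1] and M(t) = exp(μ((t,1])): if M(t) does not tend to +∞ as t → 0, then the equation X_t = B^H_t + ∫₀^t X_u dμ(u) (with X continuous on [0,1], X_0 = 0) has at most one solution; and if M(t) → +∞ as t → 0, then any two solutions differ by a function of the form t ↦ C/M(t) for some random variable C. -/
open MeasureTheory Filter Real Set

/-- `ω`-wise solution of `X_t = B^H_t + ∫₀^t X_u dμ(u)` on `[0,1]` with `X_0 = 0`,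
the integral being the limit of `∫_ε^t` as `ε → 0`. -/
def IsSolutionFBMLin {Ω : Type} (μ : Measure ℝ) (B X : ℝ → Ω → ℝ) (ω : Ω) : Prop :=
  ContinuousOn (fun t => X t ω) (Icc 0 1) ∧ X 0 ω = 0 ∧
    ∀ t ∈ Ioc (0:ℝ) 1,
      Tendsto (fun ε => ∫ r in Ioc ε t, X r ω ∂μ)
        (nhdsWithin 0 (Ioi 0)) (nhds (X t ω - B t ω))

/-!
The difference `x` of two solutions satisfies `x t - x s = ∫_(s,t] x dμ`, which forces
`z t = x t * exp (μ (t,1])` to be constant on `(0,1]`. Over `(s,t]` the increment of `z` is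
`exp (μ (t,1]) * (x t - x s * exp (μ (s,t]))`, and both `x t - x s - μ (s,t] * x s` and
`exp (μ (s,t]) - 1 - μ (s,t]` are `o(μ (s,t])` on short intervals, since `x` is continuous and `μ`
has no atoms. By compactness these local bounds become uniform, and summing them over a fine
partition gives `|z 1 - z a| ≤ ε μ (a,1]` for every `ε > 0`.
Hence `x = x 1 / M` on `(0,1]`. If `M` is bounded near `0`, then `x 1 = x t * M t → 0` as `t → 0`,
because `x` is continuous with `x 0 = 0`, so `x ≡ 0`.
-/

open Topology

theorem abs_sub_le_mul_sub_of_small_steps {f g : ℝ → ℝ} {a b ε δ : ℝ} (hδ : 0 < δ)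
    (h : ∀ s t, a ≤ s → s ≤ t → t ≤ b → t - s ≤ δ → |f t - f s| ≤ ε * (g t - g s))
    (hab : a ≤ b) : |f b - f a| ≤ ε * (g b - g a) := by
  suffices ∀ n : ℕ, ∀ s t, a ≤ s → s ≤ t → t ≤ b → t - s ≤ n * δ →
      |f t - f s| ≤ ε * (g t - g s) by
    obtain ⟨n, hn⟩ := exists_nat_ge ((b - a) / δ)
    exact this n a b le_rfl hab le_rfl ((div_le_iff₀ hδ).1 hn)
  intro n
  induction n with
  | zero =>
    intro s t _ hst _ hts
    obtain rfl : t = s := by simp at hts; linarith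
    simp
  | succ n ih =>
    intro s t has hst htb hts
    by_cases hshort : t - s ≤ δ
    · exact h s t has hst htb hshort
    have hlong := ih (s + δ) t (by linarith) (by linarith) htb (by push_cast at hts; linarith)
    have hstep := h s (s + δ) has (by linarith) (by linarith) (by linarith)
    calc |f t - f s| = |(f t - f (s + δ)) + (f (s + δ) - f s)| := by congr 1; ring
      _ ≤ |f t - f (s + δ)| + |f (s + δ) - f s| := abs_add_le _ _
      _ ≤ ε * (g t - g s) := by linarith

theorem eq_of_locally_abs_sub_le_mul_sub {f g : ℝ → ℝ} {a b : ℝ} (hab : a ≤ b)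
    (h : ∀ ε > 0, ∀ p ∈ Icc a b, ∃ δ > 0, ∀ s t, a ≤ s → s ≤ t → t ≤ b →
      s ∈ Metric.ball p δ → t ∈ Metric.ball p δ → |f t - f s| ≤ ε * (g t - g s)) :
    f a = f b := by
  have hbound : ∀ ε > 0, |f b - f a| ≤ ε * (g b - g a) := by
    intro ε hε
    choose δ hδ hδf using h ε hε
    obtain ⟨η, hη, hcover⟩ := lebesgue_number_lemma_of_metric (c := fun p : Icc a b ↦
      Metric.ball (p : ℝ) (δ p p.2)) isCompact_Icc (fun _ ↦ Metric.isOpen_ball)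
      (fun p hp ↦ mem_iUnion.2 ⟨⟨p, hp⟩, Metric.mem_ball_self (hδ p hp)⟩)
    refine abs_sub_le_mul_sub_of_small_steps (half_pos hη) (fun s t has hst htb hts ↦ ?_) hab
    obtain ⟨⟨p, hp⟩, hball⟩ := hcover s ⟨has, hst.trans htb⟩
    refine hδf p hp s t has hst htb (hball (Metric.mem_ball_self hη)) (hball ?_)
    rw [Metric.mem_ball, Real.dist_eq, abs_of_nonneg (by linarith)]
    linarith
  have hlim : Tendsto (fun ε ↦ ε * (g b - g a)) (𝓝[>] 0) (𝓝 0) := by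
    have : Tendsto (fun ε : ℝ ↦ ε * (g b - g a)) (𝓝 0) (𝓝 (0 * (g b - g a))) :=
      tendsto_id.mul_const _
    simpa using this.mono_left nhdsWithin_le_nhds
  have := ge_of_tendsto hlim (eventually_nhdsWithin_of_forall hbound)
  linarith [abs_nonpos_iff.1 this]

theorem Real.abs_sub_mul_exp_le {u v m η K : ℝ} (hm : 0 ≤ m) (hm1 : m ≤ 1) (hK : |u| ≤ K)
    (huv : |v - u - m * u| ≤ η * m) : |v - u * exp m| ≤ (η + K * m) * m := by
  have hexp : |exp m - 1 - m| ≤ m ^ 2 := abs_exp_sub_one_sub_id_le (by rwa [abs_of_nonneg hm])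
  calc |v - u * exp m| = |(v - u - m * u) - u * (exp m - 1 - m)| := by congr 1; ring
    _ ≤ |v - u - m * u| + |u| * |exp m - 1 - m| := by rw [← abs_mul]; exact abs_sub _ _
    _ ≤ η * m + K * m ^ 2 := by gcongr; exact (abs_nonneg u).trans hK
    _ = (η + K * m) * m := by ring

section Measure

variable {μ : Measure ℝ}

theorem measureReal_Ioc_add_measureReal_Ioc {a b c : ℝ} (hab : a ≤ b) (hbc : b ≤ c)
    (h : μ (Ioc a c) ≠ ⊤) : μ.real (Ioc a b) + μ.real (Ioc b c) = μ.real (Ioc a c) := by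
  rw [← Ioc_union_Ioc_eq_Ioc hab hbc, measureReal_union (Ioc_disjoint_Ioc_of_le le_rfl)
    measurableSet_Ioc (ne_top_of_le_ne_top h (measure_mono (Ioc_subset_Ioc_right hbc)))
    (ne_top_of_le_ne_top h (measure_mono (Ioc_subset_Ioc_left hab)))]

theorem ContinuousOn.integrableOn_Ioc_of_measure_ne_top {f : ℝ → ℝ} {a b : ℝ}
    (hf : ContinuousOn f (Icc a b)) (hμ : μ (Ioc a b) ≠ ⊤) : IntegrableOn f (Ioc a b) μ := by
  obtain ⟨K, hK⟩ := (isCompact_Icc.image_of_continuousOn hf).isBounded.exists_norm_le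
  refine .of_bound hμ.lt_top
    ((hf.mono Ioc_subset_Icc_self).aestronglyMeasurable measurableSet_Ioc) K ?_
  exact (ae_restrict_iff' measurableSet_Ioc).2 (.of_forall fun r hr ↦
    hK _ (mem_image_of_mem f (Ioc_subset_Icc_self hr)))

theorem abs_setIntegral_sub_measureReal_mul_le {f : ℝ → ℝ} {s t η : ℝ}
    (hf : IntegrableOn f (Ioc s t) μ) (hμ : μ (Ioc s t) ≠ ⊤)
    (hη : ∀ r ∈ Ioc s t, |f r - f s| ≤ η) :
    |(∫ r in Ioc s t, f r ∂μ) - μ.real (Ioc s t) * f s| ≤ η * μ.real (Ioc s t) := by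
  have h := norm_setIntegral_le_of_norm_le_const hμ.lt_top (f := fun r ↦ f r - f s) hη
  rwa [integral_sub hf (integrableOn_const hμ), setIntegral_const, smul_eq_mul,
    Real.norm_eq_abs] at h

theorem exists_measureReal_Ioc_le [NullSingletonClass μ] {a b : ℝ} (hμ : μ (Ioc a b) ≠ ⊤)
    (p : ℝ) {η : ℝ} (hη : 0 < η) :
    ∃ δ > 0, ∀ s t, a ≤ s → t ≤ b → s ∈ Metric.ball p δ → t ∈ Metric.ball p δ →
      μ.real (Ioc s t) ≤ η := by
  have : IsFiniteMeasure (μ.restrict (Ioc a b)) := isFiniteMeasure_restrict.2 hμ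
  obtain ⟨δ, hsmall, hδ⟩ := ((((tendsto_measure_Icc (μ.restrict (Ioc a b)) p).eventually
    (gt_mem_nhds (ENNReal.ofReal_pos.2 hη))).filter_mono nhdsWithin_le_nhds).and
    (self_mem_nhdsWithin (s := Ioi 0))).exists
  refine ⟨δ, hδ, fun s t has htb hs ht ↦ ?_⟩
  rw [Real.ball_eq_Ioo] at hs ht
  calc μ.real (Ioc s t) = (μ.restrict (Ioc a b)).real (Ioc s t) := by
        rw [measureReal_restrict_apply measurableSet_Ioc, inter_eq_left.2 (Ioc_subset_Ioc has htb)]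
    _ ≤ (μ.restrict (Ioc a b)).real (Icc (p - δ) (p + δ)) :=
        measureReal_mono (Ioc_subset_Icc_self.trans (Icc_subset_Icc hs.1.le ht.2.le))
    _ ≤ η := ENNReal.toReal_le_of_le_ofReal hη.le hsmall.le

theorem abs_mul_exp_measureReal_Ioc_sub_le {x : ℝ → ℝ} {s t b η K : ℝ} (hst : s ≤ t)
    (htb : t ≤ b) (hμ : μ (Ioc s b) ≠ ⊤) (hx : IntegrableOn x (Ioc s t) μ)
    (hint : x t - x s = ∫ r in Ioc s t, x r ∂μ) (hosc : ∀ r ∈ Ioc s t, |x r - x s| ≤ η)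
    (hK : |x s| ≤ K) (hm : μ.real (Ioc s t) ≤ 1) :
    |x t * exp (μ.real (Ioc t b)) - x s * exp (μ.real (Ioc s b))|
      ≤ exp (μ.real (Ioc t b)) * ((η + K * μ.real (Ioc s t)) * μ.real (Ioc s t)) := by
  have hμst : μ (Ioc s t) ≠ ⊤ := ne_top_of_le_ne_top hμ (measure_mono (Ioc_subset_Ioc_right htb))
  have hsplit : x t * exp (μ.real (Ioc t b)) - x s * exp (μ.real (Ioc s b))
      = exp (μ.real (Ioc t b)) * (x t - x s * exp (μ.real (Ioc s t))) := by
    rw [← measureReal_Ioc_add_measureReal_Ioc hst htb hμ, exp_add]; ring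
  rw [hsplit, abs_mul, abs_of_pos (exp_pos _)]
  gcongr
  refine Real.abs_sub_mul_exp_le measureReal_nonneg hm hK ?_
  simpa only [← hint] using abs_setIntegral_sub_measureReal_mul_le hx hμst hosc

theorem exists_abs_mul_exp_measureReal_Ioc_sub_le [NullSingletonClass μ] {x : ℝ → ℝ}
    {a b K η : ℝ} (hμ : μ (Ioc a b) ≠ ⊤) (hx : ContinuousOn x (Icc a b))
    (hint : ∀ s t, a ≤ s → s ≤ t → t ≤ b → x t - x s = ∫ r in Ioc s t, x r ∂μ)
    (hK : ∀ r ∈ Icc a b, |x r| ≤ K) (hη : 0 < η) (hη1 : η ≤ 1) {p : ℝ} (hp : p ∈ Icc a b) :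
    ∃ δ > 0, ∀ s t, a ≤ s → s ≤ t → t ≤ b → s ∈ Metric.ball p δ → t ∈ Metric.ball p δ →
      |x t * exp (μ.real (Ioc t b)) - x s * exp (μ.real (Ioc s b))|
        ≤ exp (μ.real (Ioc a b)) * (1 + K) * η * μ.real (Ioc s t) := by
  obtain ⟨δ₁, hδ₁, hμδ⟩ := exists_measureReal_Ioc_le hμ p hη
  obtain ⟨δ₂, hδ₂, hxδ⟩ := Metric.continuousWithinAt_iff.1 (hx p hp) (η / 2) (half_pos hη)
  refine ⟨min δ₁ δ₂, lt_min hδ₁ hδ₂, fun s t has hst htb hs ht ↦ ?_⟩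
  have hsb : μ (Ioc s b) ≠ ⊤ := ne_top_of_le_ne_top hμ (measure_mono (Ioc_subset_Ioc_left has))
  have hm : μ.real (Ioc s t) ≤ η := hμδ s t has htb
    (Metric.ball_subset_ball (min_le_left _ _) hs) (Metric.ball_subset_ball (min_le_left _ _) ht)
  have hosc : ∀ r ∈ Ioc s t, |x r - x s| ≤ η := by
    intro r hr
    have hs₂ := Metric.ball_subset_ball (min_le_right _ _) hs
    have ht₂ := Metric.ball_subset_ball (min_le_right _ _) ht
    have hr₂ : r ∈ Metric.ball p δ₂ := by
      rw [Real.ball_eq_Ioo] at *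
      exact ordConnected_Ioo.out hs₂ ht₂ ⟨hr.1.le, hr.2⟩
    calc |x r - x s| = dist (x r) (x s) := (Real.dist_eq _ _).symm
      _ ≤ dist (x r) (x p) + dist (x s) (x p) := dist_triangle_right _ _ _
      _ ≤ η / 2 + η / 2 := add_le_add (hxδ ⟨has.trans hr.1.le, hr.2.trans htb⟩ hr₂).le
          (hxδ ⟨has, hst.trans htb⟩ hs₂).le
      _ = η := by ring
  have hinc := abs_mul_exp_measureReal_Ioc_sub_le hst htb hsb
    ((hx.mono (Icc_subset_Icc has htb)).integrableOn_Ioc_of_measure_ne_top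
      (ne_top_of_le_ne_top hμ (measure_mono (Ioc_subset_Ioc has htb))))
    (hint s t has hst htb) hosc (hK s ⟨has, hst.trans htb⟩) (hm.trans hη1)
  have htail : μ.real (Ioc t b) ≤ μ.real (Ioc a b) :=
    measureReal_mono (Ioc_subset_Ioc_left (has.trans hst)) hμ
  have hK0 : 0 ≤ K := (abs_nonneg _).trans (hK s ⟨has, hst.trans htb⟩)
  refine hinc.trans ?_
  calc _ ≤ exp (μ.real (Ioc a b)) * ((η + K * η) * μ.real (Ioc s t)) := by gcongr
    _ = _ := by ring

theorem mul_exp_measureReal_Ioc_eq [NullSingletonClass μ] {x : ℝ → ℝ} {a b : ℝ} (hab : a ≤ b)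
    (hμ : μ (Ioc a b) ≠ ⊤) (hx : ContinuousOn x (Icc a b))
    (hint : ∀ s t, a ≤ s → s ≤ t → t ≤ b → x t - x s = ∫ r in Ioc s t, x r ∂μ) :
    x a * exp (μ.real (Ioc a b)) = x b := by
  obtain ⟨K, hK0, hK⟩ := (isCompact_Icc.image_of_continuousOn hx).isBounded.exists_pos_norm_le
  have hc : 0 < exp (μ.real (Ioc a b)) * (1 + K) := by positivity
  suffices h : ∀ ε > 0, ∀ p ∈ Icc a b, ∃ δ > 0, ∀ s t, a ≤ s → s ≤ t → t ≤ b →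
      s ∈ Metric.ball p δ → t ∈ Metric.ball p δ →
      |x t * exp (μ.real (Ioc t b)) - x s * exp (μ.real (Ioc s b))|
        ≤ ε * (-μ.real (Ioc t b) - -μ.real (Ioc s b)) by
    simpa using eq_of_locally_abs_sub_le_mul_sub (f := fun t ↦ x t * exp (μ.real (Ioc t b))) hab h
  intro ε hε p hp
  obtain ⟨δ, hδ, hloc⟩ := exists_abs_mul_exp_measureReal_Ioc_sub_le hμ hx hint
    (fun r hr ↦ hK _ (mem_image_of_mem x hr)) (lt_min one_pos (div_pos hε hc))
    (min_le_left 1 (ε / (exp (μ.real (Ioc a b)) * (1 + K)))) hp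
  refine ⟨δ, hδ, fun s t has hst htb hs ht ↦ (hloc s t has hst htb hs ht).trans ?_⟩
  have hsb : μ (Ioc s b) ≠ ⊤ := ne_top_of_le_ne_top hμ (measure_mono (Ioc_subset_Ioc_left has))
  rw [neg_sub_neg, ← measureReal_Ioc_add_measureReal_Ioc hst htb hsb, add_sub_cancel_right]
  gcongr
  calc _ ≤ exp (μ.real (Ioc a b)) * (1 + K) * (ε / (exp (μ.real (Ioc a b)) * (1 + K))) := by
        gcongr; exact min_le_right _ _
    _ = ε := by field_simp

end Measure

namespace IsSolutionFBMLin

variable {Ω : Type} {μ : Measure ℝ} {B X X₁ X₂ : ℝ → Ω → ℝ} {ω : Ω}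

theorem integrableOn_Ioc (hfin : ∀ t : ℝ, 0 < t → μ (Ioc t 1) ≠ ⊤)
    (hX : IsSolutionFBMLin μ B X ω) {s t : ℝ} (hs : 0 < s) (ht : t ≤ 1) :
    IntegrableOn (X · ω) (Ioc s t) μ :=
  (hX.1.mono (Icc_subset_Icc hs.le ht)).integrableOn_Ioc_of_measure_ne_top
    (ne_top_of_le_ne_top (hfin s hs) (measure_mono (Ioc_subset_Ioc_right ht)))

theorem sub_eq_setIntegral (hfin : ∀ t : ℝ, 0 < t → μ (Ioc t 1) ≠ ⊤)
    (hX : IsSolutionFBMLin μ B X ω) {s t : ℝ} (hs : 0 < s) (hst : s ≤ t) (ht : t ≤ 1) :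
    (X t ω - B t ω) - (X s ω - B s ω) = ∫ r in Ioc s t, X r ω ∂μ := by
  have hsplit : ∀ᶠ ε in 𝓝[>] 0, (∫ r in Ioc ε s, X r ω ∂μ) + ∫ r in Ioc s t, X r ω ∂μ
      = ∫ r in Ioc ε t, X r ω ∂μ := by
    filter_upwards [Ioo_mem_nhdsGT hs] with ε hε
    rw [← setIntegral_union (Ioc_disjoint_Ioc_of_le le_rfl) measurableSet_Ioc
      (hX.integrableOn_Ioc hfin hε.1 (hst.trans ht)) (hX.integrableOn_Ioc hfin hs ht),
      Ioc_union_Ioc_eq_Ioc hε.2.le hst]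
  have := tendsto_nhds_unique (((hX.2.2 s ⟨hs, hst.trans ht⟩).add_const _).congr' hsplit)
    (hX.2.2 t ⟨hs.trans_le hst, ht⟩)
  linarith

theorem sub_sub_eq_setIntegral (hfin : ∀ t : ℝ, 0 < t → μ (Ioc t 1) ≠ ⊤)
    (h₁ : IsSolutionFBMLin μ B X₁ ω) (h₂ : IsSolutionFBMLin μ B X₂ ω) {s t : ℝ} (hs : 0 < s)
    (hst : s ≤ t) (ht : t ≤ 1) :
    (X₁ t ω - X₂ t ω) - (X₁ s ω - X₂ s ω) = ∫ r in Ioc s t, (X₁ r ω - X₂ r ω) ∂μ := by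
  rw [integral_sub (h₁.integrableOn_Ioc hfin hs ht) (h₂.integrableOn_Ioc hfin hs ht),
    ← h₁.sub_eq_setIntegral hfin hs hst ht, ← h₂.sub_eq_setIntegral hfin hs hst ht]
  ring

theorem sub_mul_exp_eq [NullSingletonClass μ] (hfin : ∀ t : ℝ, 0 < t → μ (Ioc t 1) ≠ ⊤)
    (h₁ : IsSolutionFBMLin μ B X₁ ω) (h₂ : IsSolutionFBMLin μ B X₂ ω) {t : ℝ}
    (ht : t ∈ Ioc 0 1) :
    (X₁ t ω - X₂ t ω) * exp ((μ (Ioc t 1)).toReal) = X₁ 1 ω - X₂ 1 ω :=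
  mul_exp_measureReal_Ioc_eq (x := fun r ↦ X₁ r ω - X₂ r ω) ht.2 (hfin t ht.1)
    ((h₁.1.sub h₂.1).mono (Icc_subset_Icc_left ht.1.le))
    fun _ _ hts hsr hr ↦ h₁.sub_sub_eq_setIntegral hfin h₂ (ht.1.trans_le hts) hsr hr

theorem tendsto_nhdsGT_zero (hX : IsSolutionFBMLin μ B X ω) :
    Tendsto (X · ω) (𝓝[>] 0) (𝓝 0) := by
  have := hX.1 0 ⟨le_rfl, zero_le_one⟩
  rw [ContinuousWithinAt, hX.2.1] at this
  exact this.mono_left (nhdsWithin_le_iff.2 (Icc_mem_nhdsGT zero_lt_one))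

end IsSolutionFBMLin

theorem exists_forall_le_of_not_tendsto_atTop {M : ℝ → ℝ} {a b : ℝ}
    (hM : AntitoneOn M (Ioc a b)) (h : ¬Tendsto M (𝓝[>] a) atTop) :
    ∃ C, ∀ t ∈ Ioc a b, M t ≤ C := by
  rw [tendsto_atTop] at h
  push Not at h
  obtain ⟨C, hC⟩ := h
  refine ⟨C, fun t ht ↦ ?_⟩
  obtain ⟨s, hMs, hs⟩ := (hC.and_eventually (Ioo_mem_nhdsGT ht.1)).exists
  exact (hM ⟨hs.1, hs.2.le.trans ht.2⟩ ht hs.2.le).trans hMs.le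

theorem eq_zero_of_forall_mul_eq {x M : ℝ → ℝ} {a b c C : ℝ} (hab : a < b)
    (hx : Tendsto x (𝓝[>] a) (𝓝 0)) (hM : ∀ t ∈ Ioc a b, |M t| ≤ C)
    (h : ∀ t ∈ Ioc a b, x t * M t = c) : c = 0 := by
  have hlim : Tendsto (fun t ↦ |x t| * C) (𝓝[>] a) (𝓝 0) := by
    simpa using hx.abs.mul_const C
  have hle : ∀ᶠ t in 𝓝[>] a, |c| ≤ |x t| * C := by
    filter_upwards [Ioc_mem_nhdsGT hab] with t ht
    rw [← h t ht, abs_mul]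
    gcongr
    exact hM t ht
  exact abs_nonpos_iff.1 (ge_of_tendsto hlim hle)

theorem uniqueness_criterion_fbm_linear_sde_general
    {Ω : Type} [MeasurableSpace Ω] (P : Measure Ω)
    (μ : Measure ℝ) [NullSingletonClass μ]
    (hfin : ∀ t : ℝ, 0 < t → μ (Ioc t 1) ≠ ⊤)
    (B : ℝ → Ω → ℝ)
    (M : ℝ → ℝ) (hM : ∀ t ∈ Ioc (0:ℝ) 1, M t = Real.exp ((μ (Ioc t 1)).toReal))
    (X₁ X₂ : ℝ → Ω → ℝ)
    (h₁ : ∀ᵐ ω ∂P, IsSolutionFBMLin μ B X₁ ω)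
    (h₂ : ∀ᵐ ω ∂P, IsSolutionFBMLin μ B X₂ ω) :
    (¬ Tendsto M (nhdsWithin 0 (Ioi 0)) atTop →
        ∀ᵐ ω ∂P, ∀ t ∈ Icc (0:ℝ) 1, X₁ t ω = X₂ t ω) ∧
    (Tendsto M (nhdsWithin 0 (Ioi 0)) atTop →
        ∃ C : Ω → ℝ, ∀ᵐ ω ∂P, ∀ t ∈ Ioc (0:ℝ) 1, X₁ t ω - X₂ t ω = C ω / M t) := by
  have hMpos : ∀ t ∈ Ioc (0:ℝ) 1, 0 < M t := fun t ht ↦ hM t ht ▸ exp_pos _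
  have key : ∀ᵐ ω ∂P, ∀ t ∈ Ioc (0:ℝ) 1, (X₁ t ω - X₂ t ω) * M t = X₁ 1 ω - X₂ 1 ω := by
    filter_upwards [h₁, h₂] with ω hω₁ hω₂ t ht
    rw [hM t ht]
    exact hω₁.sub_mul_exp_eq hfin hω₂ ht
  refine ⟨fun hM_not_tendsto ↦ ?_, fun _ ↦ ⟨fun ω ↦ X₁ 1 ω - X₂ 1 ω, ?_⟩⟩
  · have hanti : AntitoneOn M (Ioc 0 1) := fun s hs t ht hst ↦ by
      rw [hM s hs, hM t ht]
      exact exp_le_exp.2 (measureReal_mono (Ioc_subset_Ioc_left hst) (hfin s hs.1))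
    obtain ⟨C, hC⟩ := exists_forall_le_of_not_tendsto_atTop hanti hM_not_tendsto
    filter_upwards [h₁, h₂, key] with ω hω₁ hω₂ hkey t ht
    have hdiff_one : X₁ 1 ω - X₂ 1 ω = 0 := eq_zero_of_forall_mul_eq zero_lt_one
      (by simpa using hω₁.tendsto_nhdsGT_zero.sub hω₂.tendsto_nhdsGT_zero)
      (fun t ht ↦ (abs_of_pos (hMpos t ht)).trans_le (hC t ht)) hkey
    rcases ht.1.eq_or_lt with rfl | ht0
    · rw [hω₁.2.1, hω₂.2.1]
    · have := hkey t ⟨ht0, ht.2⟩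
      rw [hdiff_one, mul_eq_zero, sub_eq_zero] at this
      exact this.resolve_right (hMpos t ⟨ht0, ht.2⟩).ne'
  · filter_upwards [key] with ω hkey t ht
    rw [eq_div_iff (hMpos t ht).ne']
    exact hkey t ht

/-- Uniqueness criterion: if `M(t) = exp(μ((t,1]))` does not tend to `+∞` as `t → 0`,
the linear equation driven by `B^H` has at most one solution; if `M(t) → +∞`, any two
solutions differ by `t ↦ C/M(t)` for some random variable `C`. -/
theorem uniqueness_criterion_fbm_linear_sde
    {Ω : Type} [MeasurableSpace Ω] (P : Measure Ω) [IsProbabilityMeasure P]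
    (μ : Measure ℝ) [NullSingletonClass μ]
    (hfin : ∀ t : ℝ, 0 < t → μ (Ioc t 1) ≠ ⊤)
    (B : ℝ → Ω → ℝ)
    (M : ℝ → ℝ) (hM : ∀ t ∈ Ioc (0:ℝ) 1, M t = Real.exp ((μ (Ioc t 1)).toReal))
    (X₁ X₂ : ℝ → Ω → ℝ)
    (h₁ : ∀ᵐ ω ∂P, IsSolutionFBMLin μ B X₁ ω)
    (h₂ : ∀ᵐ ω ∂P, IsSolutionFBMLin μ B X₂ ω) :
    (¬ Tendsto M (nhdsWithin 0 (Ioi 0)) atTop →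
        ∀ᵐ ω ∂P, ∀ t ∈ Icc (0:ℝ) 1, X₁ t ω = X₂ t ω) ∧
    (Tendsto M (nhdsWithin 0 (Ioi 0)) atTop →
        ∃ C : Ω → ℝ, ∀ᵐ ω ∂P, ∀ t ∈ Ioc (0:ℝ) 1, X₁ t ω - X₂ t ω = C ω / M t) :=
  uniqueness_criterion_fbm_linear_sde_general P μ hfin B M hM X₁ X₂ h₁ h₂
end

section
/- Let H ∈ (1/2,1). For the deterministic covariance of the fBm Wiener integral: if f(u) = u^{−2H} 1_{[1/t,∞)}(u) and g(u) = u^{−2H} 1_{[1/s,∞)}(u) with 0 < s ≤ t, then ∫₀^∞∫₀^∞ f(u) g(v) H(2H−1)|u−v|^{2H−2} du dv = (1/2)(t^{2H} + s^{2H} − (t−s)^{2H}). -/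
/-!
Substituting `u = 1/x`, `v = 1/y` in both integrals, the weights `u^{-2H} v^{-2H}` together with
the Jacobians `x^{-2} y^{-2}` are exactly the factor turning `|1/x - 1/y|^{2H-2}` into
`|x - y|^{2H-2}`, and the indicators become those of `(0, t]` and `(0, s]`. The remaining integral
`∫₀ᵗ ∫₀ˢ |x - y|^{2H-2} dy dx` is evaluated by the fundamental theorem of calculus twice, with the
antiderivatives `|z|^{2H-2} z / (2H-1)` of `|z|^{2H-2}` and `|z|^{2H} / (2H)` of `|z|^{2H-2} z`.
-/

open MeasureTheory Real Set

theorem intervalIntegrable_abs_rpow {r : ℝ} (hr : -1 < r) (a b : ℝ) :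
    IntervalIntegrable (fun z : ℝ => |z| ^ r) volume a b := by
  have h_nonneg : ∀ c, 0 ≤ c → IntervalIntegrable (fun z : ℝ => |z| ^ r) volume 0 c := by
    intro c hc
    rw [intervalIntegrable_iff_integrableOn_Ioo_of_le hc]
    refine ((intervalIntegrable_iff_integrableOn_Ioo_of_le hc).mp
      (intervalIntegral.intervalIntegrable_rpow' hr)).congr_fun (fun z hz => ?_) measurableSet_Ioo
    rw [abs_of_pos hz.1]
  have h_zero : ∀ c, IntervalIntegrable (fun z : ℝ => |z| ^ r) volume 0 c := by
    intro c
    rcases le_total 0 c with hc | hc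
    · exact h_nonneg c hc
    · rw [IntervalIntegrable.iff_comp_neg, neg_zero]
      simpa only [abs_neg] using h_nonneg (-c) (neg_nonneg.mpr hc)
  exact (h_zero a).symm.trans (h_zero b)

theorem hasDerivAt_abs_rpow_mul_self (p : ℝ) {x : ℝ} (hx : x ≠ 0) :
    HasDerivAt (fun z : ℝ => |z| ^ (p - 2) * z) ((p - 1) * |x| ^ (p - 2)) x := by
  refine (((hasDerivAt_abs hx).rpow_const (p := p - 2) (Or.inl (abs_ne_zero.mpr hx))).mul
    (hasDerivAt_id' x)).congr_deriv ?_
  have hsign : (SignType.sign x : ℝ) * x = |x| := by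
    rcases hx.lt_or_gt with h | h <;> simp [h, abs_of_neg, abs_of_pos]
  have hpow : |x| ^ (p - 2 - 1) * |x| = |x| ^ (p - 2) := by
    rw [← rpow_add_one (abs_ne_zero.mpr hx), sub_add_cancel]
  calc _ = (p - 2) * (|x| ^ (p - 2 - 1) * (SignType.sign x * x)) + |x| ^ (p - 2) := by ring
    _ = _ := by rw [hsign, hpow]; ring

theorem continuous_abs_rpow_mul_self {p : ℝ} (hp : 1 < p) :
    Continuous fun z : ℝ => |z| ^ (p - 2) * z := by
  have hderiv : deriv (fun z : ℝ => |z| ^ p) = fun z => p * |z| ^ (p - 2) * z :=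
    funext fun z => (hasDerivAt_abs_rpow z hp).deriv
  have h := (contDiff_norm_rpow (E := ℝ) hp).continuous_deriv le_rfl
  simp only [Real.norm_eq_abs, hderiv] at h
  convert h.div_const p using 2 with z
  field_simp

theorem integral_abs_sub_rpow {p : ℝ} (hp : 1 < p) (x s : ℝ) :
    ∫ y in (0:ℝ)..s, |x - y| ^ (p - 2) =
      (|x| ^ (p - 2) * x - |x - s| ^ (p - 2) * (x - s)) / (p - 1) := by
  have hp1 : p - 1 ≠ 0 := by linarith
  have hG := continuous_abs_rpow_mul_self hp
  have hint : IntervalIntegrable (fun y => |x - y| ^ (p - 2)) volume 0 s := by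
    simpa using (intervalIntegrable_abs_rpow (by linarith) (x - 0) (x - s)).comp_sub_left x
  rw [integral_eq_of_hasDerivAt_off_countable
    (fun y => -(|x - y| ^ (p - 2) * (x - y)) / (p - 1)) _ (countable_singleton x)
    ((hG.comp (continuous_sub_left x)).neg.div_const _).continuousOn ?deriv hint]
  · simp only [sub_zero]; ring
  case deriv =>
    intro y hy
    have hxy : x - y ≠ 0 := sub_ne_zero.mpr (Ne.symm hy.2)
    refine (((hasDerivAt_abs_rpow_mul_self p hxy).comp y
      ((hasDerivAt_id' y).const_sub x)).neg.div_const (p - 1)).congr_deriv ?_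
    field_simp

theorem integral_integral_abs_sub_rpow {p : ℝ} (hp : 1 < p) (s t : ℝ) :
    ∫ x in (0:ℝ)..t, ∫ y in (0:ℝ)..s, |x - y| ^ (p - 2) =
      (|t| ^ p + |s| ^ p - |t - s| ^ p) / (p * (p - 1)) := by
  have hp0 : p ≠ 0 := by linarith
  have hp1 : p - 1 ≠ 0 := by linarith
  have hG := continuous_abs_rpow_mul_self hp
  have hK : ∀ x, HasDerivAt (fun x => (|x| ^ p - |x - s| ^ p) / (p * (p - 1)))
      ((|x| ^ (p - 2) * x - |x - s| ^ (p - 2) * (x - s)) / (p - 1)) x := by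
    intro x
    refine (((hasDerivAt_abs_rpow x hp).sub ((hasDerivAt_abs_rpow (x - s) hp).comp x
      ((hasDerivAt_id' x).sub_const s))).div_const (p * (p - 1))).congr_deriv ?_
    field_simp
  simp_rw [integral_abs_sub_rpow hp]
  rw [intervalIntegral.integral_eq_sub_of_hasDerivAt (fun x _ => hK x)
    (((hG.sub (hG.comp (continuous_sub_right s))).div_const _).intervalIntegrable _ _)]
  simp only [zero_sub, abs_neg, abs_zero, zero_rpow hp0]
  ring

theorem integral_Ioi_comp_inv (g : ℝ → ℝ) :
    ∫ x in Ioi (0:ℝ), (x ^ 2)⁻¹ * g x⁻¹ = ∫ x in Ioi (0:ℝ), g x := by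
  rw [← integral_comp_rpow_Ioi g (p := -1) (by norm_num)]
  refine setIntegral_congr_fun measurableSet_Ioi fun x _ => ?_
  norm_num [rpow_neg_one]

theorem integral_Ioi_Ioi_comp_inv (F : ℝ → ℝ → ℝ) :
    ∫ x in Ioi (0:ℝ), ∫ y in Ioi (0:ℝ), (x ^ 2)⁻¹ * ((y ^ 2)⁻¹ * F x⁻¹ y⁻¹) =
      ∫ u in Ioi (0:ℝ), ∫ v in Ioi (0:ℝ), F u v := by
  simp_rw [integral_const_mul, integral_Ioi_comp_inv]
  exact integral_Ioi_comp_inv fun u => ∫ v in Ioi (0:ℝ), F u v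

theorem setIntegral_Ioi_indicator_Iic {t : ℝ} (ht : 0 ≤ t) (f : ℝ → ℝ) :
    ∫ x in Ioi (0:ℝ), (Iic t).indicator f x = ∫ x in (0:ℝ)..t, f x := by
  rw [setIntegral_indicator measurableSet_Iic, Ioi_inter_Iic, intervalIntegral.integral_of_le ht]

theorem indicator_Ici_one_div_inv {t x : ℝ} (ht : 0 < t) (hx : 0 < x) (f : ℝ → ℝ) :
    (Ici (1 / t)).indicator f x⁻¹ = (Iic t).indicator (fun x => f x⁻¹) x := by
  have hmem : x⁻¹ ∈ Ici (1 / t) ↔ x ∈ Iic t := by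
    rw [mem_Ici, mem_Iic, one_div, inv_le_inv₀ ht hx]
  by_cases h : x ∈ Iic t
  · rw [indicator_of_mem (hmem.mpr h), indicator_of_mem h]
  · rw [indicator_of_notMem (mt hmem.mp h), indicator_of_notMem h]

theorem inv_rpow_neg_mul_inv_rpow_neg_mul_abs_inv_sub_inv_rpow (p : ℝ) {x y : ℝ}
    (hx : 0 < x) (hy : 0 < y) :
    x⁻¹ ^ (-p) * y⁻¹ ^ (-p) * |x⁻¹ - y⁻¹| ^ (p - 2) = x ^ 2 * y ^ 2 * |x - y| ^ (p - 2) := by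
  have habs : |x⁻¹ - y⁻¹| = |x - y| * (x * y)⁻¹ := by
    rw [inv_sub_inv hx.ne' hy.ne', abs_div, abs_sub_comm, abs_of_pos (mul_pos hx hy),
      div_eq_mul_inv]
  rw [habs, mul_rpow (abs_nonneg _) (by positivity), inv_rpow (mul_pos hx hy).le,
    inv_rpow hx.le, inv_rpow hy.le, ← rpow_neg hx.le, ← rpow_neg hy.le, neg_neg,
    mul_rpow hx.le hy.le]
  have hx2 : x ^ p = x ^ 2 * x ^ (p - 2) := by
    rw [← rpow_natCast, ← rpow_add hx]; norm_num
  have hy2 : y ^ p = y ^ 2 * y ^ (p - 2) := by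
    rw [← rpow_natCast, ← rpow_add hy]; norm_num
  have : x ^ (p - 2) ≠ 0 := (rpow_pos_of_pos hx _).ne'
  have : y ^ (p - 2) ≠ 0 := (rpow_pos_of_pos hy _).ne'
  rw [hx2, hy2]
  field_simp

theorem inv_substitution_integrand_eq_indicator (p c : ℝ) {s t x y : ℝ} (hs : 0 < s)
    (ht : 0 < t) (hx : 0 < x) (hy : 0 < y) :
    (x ^ 2)⁻¹ * ((y ^ 2)⁻¹ * ((Ici (1 / t)).indicator (fun u => u ^ (-p)) x⁻¹ *
      (Ici (1 / s)).indicator (fun v => v ^ (-p)) y⁻¹ * (c * |x⁻¹ - y⁻¹| ^ (p - 2)))) =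
      (Iic t).indicator (fun x => (Iic s).indicator (fun y => c * |x - y| ^ (p - 2)) y) x := by
  rw [indicator_Ici_one_div_inv ht hx, indicator_Ici_one_div_inv hs hy]
  by_cases hxt : x ∈ Iic t
  · by_cases hys : y ∈ Iic s
    · simp only [indicator_of_mem hxt, indicator_of_mem hys]
      rw [← mul_assoc _ c, mul_comm _ c, mul_assoc c,
        inv_rpow_neg_mul_inv_rpow_neg_mul_abs_inv_sub_inv_rpow p hx hy]
      field_simp
    · simp [indicator_of_notMem hys]
  · simp [indicator_of_notMem hxt]

/-- The analytic computation behind time inversion of fBm: for `H ∈ (1/2,1)` and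
`0 < s ≤ t`, with `f(u) = u^{-2H} 1_{[1/t,∞)}(u)` and `g(v) = v^{-2H} 1_{[1/s,∞)}(v)`,
`∫₀^∞ ∫₀^∞ f(u) g(v) H(2H-1)|u-v|^{2H-2} du dv = (1/2)(t^{2H} + s^{2H} - (t-s)^{2H})`. -/
theorem time_inversion_covariance_integral
    (H : ℝ) (hH : H ∈ Set.Ioo (1/2 : ℝ) 1) (s t : ℝ) (hs : 0 < s) (hst : s ≤ t) :
    ∫ u in Ioi (0:ℝ), ∫ v in Ioi (0:ℝ),
        (Ici (1/t)).indicator (fun u : ℝ => u ^ (-(2*H))) u *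
        (Ici (1/s)).indicator (fun v : ℝ => v ^ (-(2*H))) v *
        (H * (2*H - 1) * |u - v| ^ (2*H - 2))
      = (1/2) * (t ^ (2*H) + s ^ (2*H) - (t - s) ^ (2*H)) := by
  have ht : 0 < t := hs.trans_le hst
  have hp : 1 < 2 * H := by linarith [hH.1]
  rw [← integral_Ioi_Ioi_comp_inv]
  calc _ = ∫ x in Ioi (0:ℝ), (Iic t).indicator
          (fun x => ∫ y in (0:ℝ)..s, H * (2 * H - 1) * |x - y| ^ (2 * H - 2)) x := by
        refine setIntegral_congr_fun measurableSet_Ioi fun x hx => ?_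
        rw [setIntegral_congr_fun measurableSet_Ioi fun y hy =>
          inv_substitution_integrand_eq_indicator (2 * H) _ hs ht hx hy]
        by_cases hxt : x ∈ Iic t
        · simp only [indicator_of_mem hxt, setIntegral_Ioi_indicator_Iic hs.le]
        · simp only [indicator_of_notMem hxt, integral_zero]
    _ = H * (2 * H - 1) * ∫ x in (0:ℝ)..t, ∫ y in (0:ℝ)..s, |x - y| ^ (2 * H - 2) := by
        simp only [setIntegral_Ioi_indicator_Iic ht.le, intervalIntegral.integral_const_mul]
    _ = _ := by
        rw [integral_integral_abs_sub_rpow hp, abs_of_pos ht, abs_of_pos hs,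
          abs_of_nonneg (sub_nonneg.mpr hst), mul_div_assoc',
          div_eq_iff (mul_pos (by linarith) (by linarith)).ne']
        ring
end
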